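/- The quantity F_5(n) − α_5·n is unbounded in both directions: for every real C > 0 there exists n with F_5(n) − α_5·n > C and there exists m with F_5(m) − α_5·m < −C. Hence the discrepancy Δ_5 = sup_n |F_5(n) − α_5·n| is infinite. -/

import Mathlib

/-!
Let `A` be the sequence `1, 2, 3, 4, 5, …` with `A (n + 5) = A (n + 4) + A n`. On sums of
terms `A j` whose indices are at least five apart, `F 5` lowers every index by one:
`F 5 (A (i + 4) + m) = A (i + 3) + F 5 m` for `m ≤ A i`. Hence for `N = ∑ s < t, A (6 s + c + 4)`
we get `F 5 N - α N = ∑ s < t, δ (6 s + c + 3)`, where `δ j = A j - α A (j + 1)` (`defect α j`).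

Since `X⁵ - X⁴ - 1 = (X² - X + 1)(X³ - X - 1)`, the sequence `δ` has a non-decaying component of
period six, next to a component whose roots have modulus `√α`. The sixth differences of `δ` kill
the periodic part; they satisfy a two-term recurrence that multiplies a positive definite quadratic
form by `α` at each step, so `δ (6 i + c)` differs from `δ c` by at most a convergent geometric
series. This gives `δ (6 i + 4) ≥ 1/10` and `δ (6 i + 7) ≤ -1/10`, so the sums above are at least
`t / 10`, resp. at most `-t / 10`.
-/

/-- Fuel-limited version of Hofstadter's recursion:
`Fa k fuel n` equals `F_k n` whenever `fuel ≥ n`. -/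
def Fa (k : ℕ) : ℕ → ℕ → ℕ
  | 0, _ => 0
  | _ + 1, 0 => 0
  | fuel + 1, n + 1 => (n + 1) - (Fa k fuel)^[k] n

/-- Hofstadter's function `F_k` : `F k 0 = 0` and `F k n = n - (F k)^[k] (n-1)`
for `n ≥ 1` (since `F_k m ≤ m`, the fuel `n` is always sufficient). -/
def F (k : ℕ) (n : ℕ) : ℕ := Fa k n n

/-- The function `L_k n = n + (F k)^[k-1] n`. -/
def L (k : ℕ) (n : ℕ) : ℕ := n + (F k)^[k - 1] n

open Finset Function

theorem Set.EqOn.iterate {β : Type*} {f g : β → β} {s : Set β} (h : Set.EqOn f g s)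
    (hf : Set.MapsTo f s s) : ∀ n, Set.EqOn f^[n] g^[n] s
  | 0 => fun _ _ => rfl
  | n + 1 => fun x hx => by
    rw [iterate_succ_apply, iterate_succ_apply, ← h hx]
    exact Set.EqOn.iterate h hf n (hf hx)

theorem iterate_le_iterate_succ_le_add_one {g : ℕ → ℕ} {N : ℕ}
    (hg : ∀ x < N, g x ≤ g (x + 1) ∧ g (x + 1) ≤ g x + 1) (hle : ∀ x, g x ≤ x) :
    ∀ i x, x < N → g^[i] x ≤ g^[i] (x + 1) ∧ g^[i] (x + 1) ≤ g^[i] x + 1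
  | 0, _, _ => by simp
  | i + 1, x, hx => by
    simp only [iterate_succ_apply]
    have := hg x hx
    rcases (by omega : g (x + 1) = g x ∨ g (x + 1) = g x + 1) with h | h
    · rw [h]
      exact ⟨le_rfl, Nat.le_succ _⟩
    · rw [h]
      exact iterate_le_iterate_succ_le_add_one hg hle i (g x) ((hle x).trans_lt hx)

namespace Hofstadter

theorem Fa_le (k fuel n : ℕ) : Fa k fuel n ≤ n := by
  cases fuel <;> cases n <;> simp [Fa]

theorem Fa_eq_Fa (k : ℕ) {fuel fuel' n : ℕ} (h : n ≤ fuel) (h' : n ≤ fuel') :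
    Fa k fuel n = Fa k fuel' n := by
  induction fuel generalizing fuel' n with
  | zero => cases n <;> cases fuel' <;> simp_all [Fa]
  | succ f ih =>
    match n, fuel' with
    | 0, fuel' => cases fuel' <;> rfl
    | m + 1, f' + 1 =>
      have hEq : Set.EqOn (Fa k f) (Fa k f') (Set.Iic m) := fun x hx =>
        ih (le_trans hx (by omega)) (le_trans hx (by omega))
      have hmaps : Set.MapsTo (Fa k f) (Set.Iic m) (Set.Iic m) := fun x hx =>
        (Fa_le k f x).trans hx
      simp only [Fa, hEq.iterate hmaps k Set.self_mem_Iic]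

@[simp]
theorem F_zero (k : ℕ) : F k 0 = 0 := rfl

theorem F_le (k n : ℕ) : F k n ≤ n := Fa_le k n n

theorem mapsTo_F_Iic (k n : ℕ) : Set.MapsTo (F k) (Set.Iic n) (Set.Iic n) :=
  fun x hx => (F_le k x).trans hx

theorem F_succ (k n : ℕ) : F k (n + 1) = n + 1 - (F k)^[k] n := by
  have hEq : Set.EqOn (Fa k n) (F k) (Set.Iic n) := fun x hx => Fa_eq_Fa k hx le_rfl
  have hmaps : Set.MapsTo (Fa k n) (Set.Iic n) (Set.Iic n) := fun x hx => (Fa_le k n x).trans hx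
  show n + 1 - (Fa k n)^[k] n = _
  rw [hEq.iterate hmaps k Set.self_mem_Iic]

theorem F_succ_add_iterate (k n : ℕ) : F k (n + 1) + (F k)^[k] n = n + 1 := by
  have : (F k)^[k] n ≤ n := (mapsTo_F_Iic k n).iterate k Set.self_mem_Iic
  rw [F_succ]
  omega

theorem F_le_F_succ_le_add_one (k n : ℕ) : F k n ≤ F k (n + 1) ∧ F k (n + 1) ≤ F k n + 1 := by
  induction n using Nat.strong_induction_on with
  | _ n ih =>
  cases n with
  | zero =>
    have h := F_succ_add_iterate k 0
    rw [iterate_fixed (F_zero k)] at h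
    exact ⟨Nat.zero_le _, by omega⟩
  | succ m =>
    have hiter := iterate_le_iterate_succ_le_add_one ih (F_le k) k m (Nat.lt_succ_self m)
    have := F_succ_add_iterate k m
    have := F_succ_add_iterate k (m + 1)
    omega

theorem F_monotone (k : ℕ) : Monotone (F k) :=
  monotone_nat_of_le_succ fun n => (F_le_F_succ_le_add_one k n).1


def A : ℕ → ℕ
  | 0 => 1
  | 1 => 2
  | 2 => 3
  | 3 => 4
  | 4 => 5
  | n + 5 => A (n + 4) + A n

theorem A_add_five (n : ℕ) : A (n + 5) = A (n + 4) + A n := rfl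

theorem A_pos : ∀ n, 0 < A n
  | 0 | 1 | 2 | 3 | 4 => by decide
  | n + 5 => Nat.add_pos_left (A_pos (n + 4)) _

theorem A_strictMono : StrictMono A :=
  strictMono_nat_of_lt_succ fun n =>
    match n with
    | 0 | 1 | 2 | 3 => by decide
    | n + 4 => Nat.lt_add_of_pos_right (A_pos n)

theorem F_A_add_of_lt_four :
    ∀ i < 4, ∀ m ≤ A i, F 5 (A (i + 4) + m) = A (i + 3) + F 5 m := by
  decide

theorem F_A_succ_of_lt_three : ∀ n < 3, F 5 (A (n + 1)) = A n := by
  decide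

theorem iterate_F_A_add {l : ℕ} :
    ∀ n m, (∀ j < n, ∀ x ≤ A (l + j), F 5 (A (l + j + 4) + x) = A (l + j + 3) + F 5 x) →
      (∀ j < n, F 5 (A (l + j + 1)) = A (l + j)) → m ≤ A (l + n) →
      F 5 (A (l + n + 4) + m) = A (l + n + 3) + F 5 m →
      (F 5)^[n + 1] (A (l + n + 4) + m) = A (l + 3) + (F 5)^[n + 1] m
  | 0, _, _, _, _, hm => hm
  | n + 1, m, hshift, hval, hle, hm => by
    have hFm : F 5 m ≤ A (l + n) :=
      (F_monotone 5 hle).trans_eq (hval n (Nat.lt_succ_self n))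
    rw [iterate_succ_apply, hm, iterate_succ_apply]
    exact iterate_F_A_add n (F 5 m) (fun j hj => hshift j (by omega))
      (fun j hj => hval j (by omega)) hFm (hshift n (Nat.lt_succ_self n) _ hFm)

theorem F_A_add (i : ℕ) : ∀ m ≤ A i, F 5 (A (i + 4) + m) = A (i + 3) + F 5 m := by
  induction i using Nat.strong_induction_on with
  | _ i ih =>
  obtain hi | ⟨l, rfl⟩ : i < 4 ∨ ∃ l, i = l + 4 := by
    rcases lt_or_ge i 4 with hi | hi
    · exact .inl hi
    · exact .inr ⟨i - 4, by omega⟩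
  · exact F_A_add_of_lt_four i hi
  have hshift : ∀ j < 4, ∀ x ≤ A (l + j), F 5 (A (l + j + 4) + x) = A (l + j + 3) + F 5 x :=
    fun j hj => ih (l + j) (by omega)
  have hval : ∀ j < 4, F 5 (A (l + j + 1)) = A (l + j) := by
    intro j hj
    rcases lt_or_ge (l + j) 3 with h | h
    · exact F_A_succ_of_lt_three (l + j) h
    · obtain ⟨n, hn⟩ : ∃ n, l + j = n + 3 := ⟨l + j - 3, by omega⟩
      rw [hn]
      simpa using ih n (by omega) 0 (Nat.zero_le _)
  intro m hm
  induction m with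
  | zero =>
    have h₁ : A (l + 8) = A (l + 7) + A (l + 3) := A_add_five (l + 3)
    have h₂ : A (l + 7) = A (l + 6) + A (l + 2) := A_add_five (l + 2)
    have h₃ : F 5 (A (l + 7) + A (l + 3)) = A (l + 6) + F 5 (A (l + 3)) :=
      hshift 3 (by omega) _ le_rfl
    have h₄ : F 5 (A (l + 3)) = A (l + 2) := hval 2 (by omega)
    show F 5 (A (l + 8)) = A (l + 7) + 0
    rw [h₁, h₃, h₄, h₂, add_zero]
  | succ m ihm =>
    have h₅ : (F 5)^[5] (A (l + 8) + m) = A (l + 3) + (F 5)^[5] m :=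
      iterate_F_A_add 4 m hshift hval (by omega) (ihm (by omega))
    have h₆ := F_succ_add_iterate 5 (A (l + 8) + m)
    have h₇ := F_succ_add_iterate 5 m
    have h₁ : A (l + 8) = A (l + 7) + A (l + 3) := A_add_five (l + 3)
    show F 5 (A (l + 8) + m + 1) = A (l + 7) + F 5 (m + 1)
    omega

theorem sum_A_le (c t : ℕ) : ∑ s ∈ range t, A (6 * s + c + 4) ≤ A (6 * t + c) := by
  induction t with
  | zero => exact Nat.zero_le _
  | succ t ih =>
    have h₁ : A (6 * (t + 1) + c) = A (6 * t + c + 5) + A (6 * t + c + 1) := by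
      rw [show 6 * (t + 1) + c = 6 * t + c + 1 + 5 by ring, A_add_five]
    have h₂ := A_strictMono.monotone (show 6 * t + c ≤ 6 * t + c + 1 by omega)
    have h₃ := A_strictMono.monotone (show 6 * t + c + 4 ≤ 6 * t + c + 5 by omega)
    rw [sum_range_succ]
    omega

theorem F_sum_A (c t : ℕ) :
    F 5 (∑ s ∈ range t, A (6 * s + c + 4)) = ∑ s ∈ range t, A (6 * s + c + 3) := by
  induction t with
  | zero => rfl
  | succ t ih =>
    rw [sum_range_succ, sum_range_succ, add_comm, F_A_add _ _ (sum_A_le c t), ih, add_comm]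

noncomputable def defect (α : ℝ) (j : ℕ) : ℝ := A j - α * A (j + 1)

theorem F_sum_A_sub_mul (α : ℝ) (c t : ℕ) :
    (F 5 (∑ s ∈ range t, A (6 * s + c + 4)) : ℝ) - α * (∑ s ∈ range t, A (6 * s + c + 4) : ℕ) =
      ∑ s ∈ range t, defect α (6 * s + c + 3) := by
  rw [F_sum_A]
  push_cast
  rw [mul_sum, ← sum_sub_distrib]
  rfl

-- `(X⁶ - 1)(X³ - X - 1) = (X⁵ - X⁴ - 1)(X + 1)(X³ - 1)`
theorem sixth_diff_rec {R : Type*} [CommRing R] {u : ℕ → R}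
    (hu : ∀ n, u (n + 5) = u (n + 4) + u n) (j : ℕ) :
    u (j + 9) - u (j + 3) = (u (j + 7) - u (j + 1)) + (u (j + 6) - u j) := by
  have h₀ : u (j + 5) = u (j + 4) + u j := hu j
  have h₁ : u (j + 6) = u (j + 5) + u (j + 1) := hu (j + 1)
  have h₃ : u (j + 8) = u (j + 7) + u (j + 3) := hu (j + 3)
  have h₄ : u (j + 9) = u (j + 8) + u (j + 4) := hu (j + 4)
  linear_combination h₄ + h₃ - h₁ - h₀

-- `X³ - X - 1 = (X - α⁻¹)(X² + α⁻¹ X + α)` when `α³ + α² = 1`.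
theorem defect_sixth_diff_rec {α : ℝ} (hα : α ^ 3 + α ^ 2 = 1) (j : ℕ) :
    α * (defect α (j + 8) - defect α (j + 2)) + (defect α (j + 7) - defect α (j + 1)) +
      α ^ 2 * (defect α (j + 6) - defect α j) = 0 := by
  have hA := sixth_diff_rec (u := fun n => (A n : ℝ)) (fun n => by simp [A_add_five]) j
  simp only [defect]
  linear_combination (-α ^ 2) * hA - ((A (j + 7) : ℝ) - A (j + 1)) * hα

section QuadForm

variable {α : ℝ} {s : ℕ → ℝ}

def quadForm (α : ℝ) (s : ℕ → ℝ) (j : ℕ) : ℝ :=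
  α ^ 2 * s j ^ 2 + s j * s (j + 1) + α * s (j + 1) ^ 2

theorem quadForm_succ (hα : α ≠ 0) (hs : ∀ j, α * s (j + 2) + s (j + 1) + α ^ 2 * s j = 0)
    (j : ℕ) : quadForm α s (j + 1) = α * quadForm α s j := by
  apply mul_left_cancel₀ hα
  simp only [quadForm]
  linear_combination (α * s (j + 2) - α ^ 2 * s j) * hs j

theorem quadForm_eq_pow_mul (hα : α ≠ 0)
    (hs : ∀ j, α * s (j + 2) + s (j + 1) + α ^ 2 * s j = 0) (j : ℕ) :
    quadForm α s j = α ^ j * quadForm α s 0 := by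
  induction j with
  | zero => simp
  | succ j ih => rw [quadForm_succ hα hs, ih, pow_succ]; ring

theorem sq_le_five_mul_quadForm (hα : 3 / 4 ≤ α) (j : ℕ) : s j ^ 2 ≤ 5 * quadForm α s j := by
  have he : 0 ≤ α - 3 / 4 := by linarith
  have hcoef : 0 ≤ 20 * α ^ 3 - 4 * α - 5 := by
    nlinarith [mul_nonneg he he, mul_nonneg (mul_nonneg he he) he]
  have key : 4 * α * (5 * quadForm α s j - s j ^ 2) =
      5 * (2 * α * s (j + 1) + s j) ^ 2 + (20 * α ^ 3 - 4 * α - 5) * s j ^ 2 := by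
    simp only [quadForm]; ring
  have : 0 ≤ 4 * α * (5 * quadForm α s j - s j ^ 2) := by rw [key]; positivity
  linarith [(mul_nonneg_iff_of_pos_left (by linarith : (0 : ℝ) < 4 * α)).1 this]

end QuadForm

theorem abs_sub_le_of_abs_sub_succ_le_geometric {u : ℕ → ℝ} {B r : ℝ} (hr₀ : 0 ≤ r) (hr₁ : r < 1)
    (h : ∀ i, |u (i + 1) - u i| ≤ B * r ^ i) (n : ℕ) : |u n - u 0| ≤ B / (1 - r) := by
  have hB : 0 ≤ B := by simpa using (abs_nonneg _).trans (h 0)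
  calc |u n - u 0| = |∑ i ∈ range n, (u (i + 1) - u i)| := by rw [sum_range_sub]
    _ ≤ ∑ i ∈ range n, |u (i + 1) - u i| := abs_sum_le_sum_abs _ _
    _ ≤ ∑ i ∈ range n, B * r ^ i := sum_le_sum fun i _ => h i
    _ = B * ∑ i ∈ Ico 0 n, r ^ i := by rw [← mul_sum, range_eq_Ico]
    _ ≤ B * (r ^ 0 / (1 - r)) :=
      mul_le_mul_of_nonneg_left (geom_sum_Ico_le_of_lt_one hr₀ hr₁) hB
    _ = B / (1 - r) := by ring

theorem cubic_of_quintic {α : ℝ} (h : α ^ 5 + α - 1 = 0) : α ^ 3 + α ^ 2 = 1 := by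
  have hfac : (α ^ 2 - α + 1) * (α ^ 3 + α ^ 2 - 1) = 0 := by linear_combination h
  have hne : α ^ 2 - α + 1 ≠ 0 := by nlinarith [sq_nonneg (α - 1 / 2)]
  linear_combination (mul_eq_zero.1 hfac).resolve_left hne

theorem bounds_of_cubic {α : ℝ} (hα : α ^ 3 + α ^ 2 = 1) : 754 / 1000 < α ∧ α < 755 / 1000 := by
  constructor <;> nlinarith [sq_nonneg α, sq_nonneg (α + 1), sq_nonneg (α - 754 / 1000),
    sq_nonneg (α - 755 / 1000)]

theorem abs_defect_sub_le {α : ℝ} (hα : α ^ 3 + α ^ 2 = 1) {c : ℕ} {M : ℝ} (hM : 0 ≤ M) (hc : 5 * α ^ c * (4 * α ^ 2 - 3 * α) ≤ M ^ 2 * α ^ 4) (i : ℕ) :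
    |defect α (6 * i + c) - defect α c| ≤ M := by
  set s : ℕ → ℝ := fun j => defect α (j + 6) - defect α j with hs_def
  have hα₀ : 3 / 4 ≤ α := (bounds_of_cubic hα).1.le.trans' (by norm_num)
  have hα₁ : 0 < α := by linarith
  have hα' : α ≠ 0 := hα₁.ne'
  have hs : ∀ j, α * s (j + 2) + s (j + 1) + α ^ 2 * s j = 0 := defect_sixth_diff_rec hα
  have hQ₀ : quadForm α s 0 = 4 * α ^ 2 - 3 * α := by
    simp only [quadForm, hs_def, defect]
    norm_num [A]
    linear_combination (81 * α - 63) * hα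
  have hstep : ∀ i, |s (6 * i + c)| ≤ M * α ^ 2 * (α ^ 3) ^ i := by
    intro i
    apply abs_le_of_sq_le_sq _ (by positivity)
    calc s (6 * i + c) ^ 2 ≤ 5 * quadForm α s (6 * i + c) := sq_le_five_mul_quadForm hα₀ _
      _ = ((α ^ 3) ^ i) ^ 2 * (5 * α ^ c * (4 * α ^ 2 - 3 * α)) := by
        rw [quadForm_eq_pow_mul hα' hs, hQ₀]; ring
      _ ≤ ((α ^ 3) ^ i) ^ 2 * (M ^ 2 * α ^ 4) := by gcongr
      _ = (M * α ^ 2 * (α ^ 3) ^ i) ^ 2 := by ring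
  have hgeom := abs_sub_le_of_abs_sub_succ_le_geometric (u := fun i => defect α (6 * i + c))
    (B := M * α ^ 2) (r := α ^ 3) (by positivity) (by nlinarith) (fun i => by
      rw [show 6 * (i + 1) + c = 6 * i + c + 6 by ring]; exact hstep i) i
  rwa [show 1 - α ^ 3 = α ^ 2 by linarith, mul_div_assoc, div_self (pow_ne_zero 2 hα'),
    mul_one, mul_zero, zero_add] at hgeom

theorem one_tenth_le_defect {α : ℝ} (hα : α ^ 3 + α ^ 2 = 1) (i : ℕ) :
    1 / 10 ≤ defect α (6 * i + 4) := by
  obtain ⟨hlo, hhi⟩ := bounds_of_cubic hα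
  have hc : 5 * α ^ 4 * (4 * α ^ 2 - 3 * α) ≤ (3 / 10) ^ 2 * α ^ 4 := by
    have : 5 * (4 * α ^ 2 - 3 * α) ≤ (3 / 10) ^ 2 := by nlinarith
    nlinarith [pow_nonneg (by linarith : (0 : ℝ) ≤ α) 4]
  have h := abs_le.1 (abs_defect_sub_le hα (by norm_num) hc i)
  have h4 : defect α 4 = 5 - 6 * α := by norm_num [defect, A]; ring
  linarith [h.1]

theorem defect_le_neg_one_tenth {α : ℝ} (hα : α ^ 3 + α ^ 2 = 1) (i : ℕ) :
    defect α (6 * i + 7) ≤ -(1 / 10) := by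
  obtain ⟨hlo, hhi⟩ := bounds_of_cubic hα
  have hc : 5 * α ^ 7 * (4 * α ^ 2 - 3 * α) ≤ (1 / 5) ^ 2 * α ^ 4 := by
    have : 5 * α ^ 3 * (4 * α ^ 2 - 3 * α) ≤ (1 / 5) ^ 2 := by nlinarith
    nlinarith [pow_nonneg (by linarith : (0 : ℝ) ≤ α) 4]
  have h := abs_le.1 (abs_defect_sub_le hα (by norm_num) hc i)
  have h7 : defect α 7 = 11 - 15 * α := by norm_num [defect, A]; ring
  linarith [h.2]

theorem le_F_sub_mul_sum_A {α : ℝ} (hα : α ^ 3 + α ^ 2 = 1) (t : ℕ) :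
    (t : ℝ) / 10 ≤ (F 5 (∑ s ∈ range t, A (6 * s + 1 + 4)) : ℝ) -
      α * (∑ s ∈ range t, A (6 * s + 1 + 4) : ℕ) := by
  rw [F_sum_A_sub_mul]
  calc (t : ℝ) / 10 = ∑ _s ∈ range t, (1 / 10 : ℝ) := by simp; ring
    _ ≤ _ := sum_le_sum fun s _ => one_tenth_le_defect hα s

theorem F_sub_mul_sum_A_le {α : ℝ} (hα : α ^ 3 + α ^ 2 = 1) (t : ℕ) :
    (F 5 (∑ s ∈ range t, A (6 * s + 4 + 4)) : ℝ) -
      α * (∑ s ∈ range t, A (6 * s + 4 + 4) : ℕ) ≤ -((t : ℝ) / 10) := by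
  rw [F_sum_A_sub_mul]
  calc _ ≤ ∑ _s ∈ range t, (-(1 / 10) : ℝ) := sum_le_sum fun s _ => defect_le_neg_one_tenth hα s
    _ = -((t : ℝ) / 10) := by simp; ring

end Hofstadter

theorem discrepancy_infinite_five_general (α : ℝ) (hαroot : α ^ 5 + α - 1 = 0) :
    (∀ C : ℝ, 0 < C →
      (∃ n : ℕ, C < (F 5 n : ℝ) - α * n) ∧ (∃ m : ℕ, (F 5 m : ℝ) - α * m < -C)) ∧
    ¬ BddAbove (Set.range fun n : ℕ => |(F 5 n : ℝ) - α * n|) := by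
  have hα := Hofstadter.cubic_of_quintic hαroot
  have unbounded : ∀ C : ℝ, 0 < C →
      (∃ n : ℕ, C < (F 5 n : ℝ) - α * n) ∧ (∃ m : ℕ, (F 5 m : ℝ) - α * m < -C) := by
    intro C _
    obtain ⟨t, ht⟩ := exists_nat_gt (10 * C)
    exact ⟨⟨_, (by linarith : C < t / 10).trans_le (Hofstadter.le_F_sub_mul_sum_A hα t)⟩,
      ⟨_, (Hofstadter.F_sub_mul_sum_A_le hα t).trans_lt (by linarith)⟩⟩
  refine ⟨unbounded, fun ⟨M, hM⟩ => ?_⟩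
  obtain ⟨⟨n, hn⟩, -⟩ := unbounded (|M| + 1) (by positivity)
  linarith [hM ⟨n, rfl⟩, le_abs_self ((F 5 n : ℝ) - α * n), le_abs_self M]

/-- `F_5 n - α_5 n` is unbounded in both directions, hence the discrepancy
`Δ_5 = sup |F_5 n - α_5 n|` is infinite. -/
theorem discrepancy_infinite_five (α : ℝ)
    (hα : α ∈ Set.Ioo (0 : ℝ) 1) (hαroot : α ^ 5 + α - 1 = 0) :
    (∀ C : ℝ, 0 < C →
      (∃ n : ℕ, C < (F 5 n : ℝ) - α * n) ∧ (∃ m : ℕ, (F 5 m : ℝ) - α * m < -C)) ∧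
    ¬ BddAbove (Set.range fun n : ℕ => |(F 5 n : ℝ) - α * n|) :=
  discrepancy_infinite_five_general α hαroot
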